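/- Let k : M → L be a compactification of a frame L. Then the relation ⊲ₖ (the smallest relation on L containing {(k b, k a) : a, b ∈ M, b ≺ a in M} and closed under conditions (1)–(5) of a strong inclusion, taken with P = L) is a strong inclusion on L compatible with L: it satisfies conditions (1)–(7), and every a ∈ L satisfies a = sSup {x | x ⊲ₖ a}. -/

import Mathlib

/-- The well-inside relation of a frame: `b` is well inside `a` iff `bᶜ ⊔ a = ⊤`. -/
def WellInside {L : Type*} [Order.Frame L] (b a : L) : Prop := bᶜ ⊔ a = ⊤

/-- A frame is regular if every element is the join of the elements well inside it. -/
def IsRegularFrame (L : Type*) [Order.Frame L] : Prop :=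
  ∀ a : L, a = sSup {b | WellInside b a}

/-- A frame is compact if `⊤` is a compact element. -/
def IsCompactFrame (L : Type*) [Order.Frame L] : Prop :=
  ∀ S : Set L, ⊤ ≤ sSup S → ∃ T : Set L, T ⊆ S ∧ T.Finite ∧ ⊤ ≤ sSup T

/-- A sub-pcd-lattice of a frame `L`: a subset containing `⊥` and `⊤`, closed
under binary meets, binary joins and pseudocomplements (computed in `L`). -/
def IsSubPcdLattice {L : Type*} [Order.Frame L] (P : Set L) : Prop :=
  ⊥ ∈ P ∧ ⊤ ∈ P ∧ (∀ x ∈ P, ∀ y ∈ P, x ⊓ y ∈ P) ∧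
    (∀ x ∈ P, ∀ y ∈ P, x ⊔ y ∈ P) ∧ (∀ x ∈ P, xᶜ ∈ P)

/-- A strong inclusion on a sub-pcd-lattice `P` of a frame `L`:
conditions (1)–(7) of Banaschewski. -/
def IsStrongInclusion {L : Type*} [Order.Frame L] (P : Set L) (r : L → L → Prop) : Prop :=
  (r ⊥ ⊥ ∧ r ⊤ ⊤) ∧
  (∀ x a b y, x ∈ P → y ∈ P → x ≤ a → r a b → b ≤ y → r x y) ∧
  (∀ x a b, r x a → r x b → r x (a ⊓ b)) ∧
  (∀ x y a, r x a → r y a → r (x ⊔ y) a) ∧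
  (∀ a b, r a b → r bᶜ aᶜ) ∧
  (∀ a b, r a b → WellInside a b) ∧
  (∀ a b, r a b → ∃ z ∈ P, r a z ∧ r z b)

/-- A relation on `P` is closed under conditions (1)–(5) of a strong inclusion. -/
def ClosedUnder15 {L : Type*} [Order.Frame L] (P : Set L) (r : L → L → Prop) : Prop :=
  (r ⊥ ⊥ ∧ r ⊤ ⊤) ∧
  (∀ x a b y, x ∈ P → y ∈ P → x ≤ a → r a b → b ≤ y → r x y) ∧
  (∀ x a b, r x a → r x b → r x (a ⊓ b)) ∧
  (∀ x y a, r x a → r y a → r (x ⊔ y) a) ∧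
  (∀ a b, r a b → r bᶜ aᶜ)

/-- The smallest relation containing `R` and closed under conditions (1)–(5) of a
strong inclusion on `P`: the intersection of all such relations. -/
def leastClosed15 {L : Type*} [Order.Frame L] (P : Set L) (R : L → L → Prop) :
    L → L → Prop :=
  fun x y => ∀ r : L → L → Prop, (∀ a b, R a b → r a b) → ClosedUnder15 P r → r x y

/-- The strong inclusion associated with a compactification `k : M → L`:
the smallest relation on `L` containing all pairs `(k b, k a)` with `b` well
inside `a` in `M`, closed under conditions (1)–(5) (with `P = L`). -/
def kIncl {M L : Type*} [Order.Frame M] [Order.Frame L] (k : FrameHom M L) :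
    L → L → Prop :=
  leastClosed15 Set.univ
    (fun x y => ∃ a b : M, WellInside b a ∧ x = k b ∧ y = k a)

/-!
Both `≺` (in any frame) and the relation "`x ⊲ z ⊲ y` for some `z`" (for any relation `⊲`
closed under (1)–(5)) are closed under (1)–(5). Since frame homomorphisms preserve `≺`, and `≺`
interpolates in a compact regular frame, minimality of `⊲ₖ` gives (6) and (7). Compatibility is
regularity of `M` transported along the surjective, join-preserving `k`.
-/

open Set

section WellInside

variable {L : Type*} [Order.Frame L] {a b x y : L}

lemma WellInside.le (h : WellInside b a) : b ≤ a := by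
  calc b = b ⊓ (bᶜ ⊔ a) := by rw [h, inf_top_eq]
    _ = b ⊓ bᶜ ⊔ b ⊓ a := inf_sup_left _ _ _
    _ ≤ a := by simp

lemma wellInside_bot_left (a : L) : WellInside ⊥ a := by simp [WellInside]

lemma wellInside_top_top : WellInside (⊤ : L) ⊤ := by simp [WellInside]

lemma WellInside.mono (hx : x ≤ a) (h : WellInside a b) (hy : b ≤ y) : WellInside x y :=
  top_le_iff.mp (h ▸ sup_le_sup (compl_le_compl hx) hy)

lemma WellInside.inf_right (ha : WellInside x a) (hb : WellInside x b) :
    WellInside x (a ⊓ b) := by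
  rw [WellInside, sup_inf_left, ha, hb, inf_top_eq]

lemma WellInside.sup_left (hx : WellInside x a) (hy : WellInside y a) :
    WellInside (x ⊔ y) a := by
  rw [WellInside, compl_sup, sup_inf_right, hx, hy, inf_top_eq]

lemma WellInside.compl (h : WellInside a b) : WellInside bᶜ aᶜ := by
  refine top_le_iff.mp ?_
  calc ⊤ = b ⊔ aᶜ := by rw [sup_comm, h]
    _ ≤ bᶜᶜ ⊔ aᶜ := sup_le_sup_right le_compl_compl _

lemma closedUnder15_wellInside : ClosedUnder15 (univ : Set L) WellInside :=
  ⟨⟨wellInside_bot_left ⊥, wellInside_top_top⟩, fun _ _ _ _ _ _ => WellInside.mono,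
    fun _ _ _ => WellInside.inf_right, fun _ _ _ => WellInside.sup_left,
    fun _ _ => WellInside.compl⟩

lemma supClosed_wellInside_left (a : L) : SupClosed {x | WellInside x a} :=
  fun _ hx _ hy => WellInside.sup_left hx hy

lemma WellInside.map {M : Type*} [Order.Frame M] (f : FrameHom M L) {b a : M}
    (h : WellInside b a) : WellInside (f b) (f a) := by
  have hcompl : f bᶜ ≤ (f b)ᶜ :=
    le_compl_iff_disjoint_right.mpr (disjoint_compl_left.map f)
  refine top_le_iff.mp ?_
  calc ⊤ = f bᶜ ⊔ f a := by rw [← map_sup, h, map_top]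
    _ ≤ (f b)ᶜ ⊔ f a := sup_le_sup_right hcompl _

/-- Cover `⊤ = bᶜ ⊔ a` by the elements well inside `bᶜ` or `a`; by compactness finitely many
suffice, and the join `c` of those well inside `a` satisfies `b ≺ c ≺ a`. -/
lemma WellInside.exists_between (hc : IsCompactFrame L) (hr : IsRegularFrame L)
    (h : WellInside b a) : ∃ c, WellInside b c ∧ WellInside c a := by
  set S₁ := {d | WellInside d bᶜ}
  set S₂ := {c | WellInside c a}
  have hcover : ⊤ ≤ sSup (S₁ ∪ S₂) := by
    rw [sSup_union, ← hr bᶜ, ← hr a, h]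
  obtain ⟨T, hTS, hT, hTtop⟩ := hc _ hcover
  have hd : WellInside (sSup (T ∩ S₁)) bᶜ := (supClosed_wellInside_left bᶜ).sSup_mem
    (hT.inter_of_left _) (wellInside_bot_left _) inter_subset_right
  have hca : WellInside (sSup (T ∩ S₂)) a := (supClosed_wellInside_left a).sSup_mem
    (hT.inter_of_left _) (wellInside_bot_left _) inter_subset_right
  have hsplit : sSup T ≤ sSup (T ∩ S₁) ⊔ sSup (T ∩ S₂) := by
    rw [← sSup_union, ← inter_union_distrib_left, inter_eq_left.mpr hTS]
  refine ⟨_, top_le_iff.mp ?_, hca⟩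
  exact hTtop.trans (hsplit.trans (sup_le_sup_right hd.le _))

end WellInside

section LeastClosed15

variable {L : Type*} [Order.Frame L] {P : Set L} {R r : L → L → Prop}

lemma leastClosed15_of_rel {a b : L} (h : R a b) : leastClosed15 P R a b :=
  fun _ hR _ => hR a b h

lemma leastClosed15_le (hR : ∀ a b, R a b → r a b) (hr : ClosedUnder15 P r) {x y : L}
    (h : leastClosed15 P R x y) : r x y :=
  h r hR hr

lemma closedUnder15_leastClosed15 : ClosedUnder15 P (leastClosed15 P R) :=
  ⟨⟨fun _ _ hr => hr.1.1, fun _ _ hr => hr.1.2⟩,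
    fun x a b y hx hy hxa hab hby r hR hr => hr.2.1 x a b y hx hy hxa (hab r hR hr) hby,
    fun x a b ha hb r hR hr => hr.2.2.1 x a b (ha r hR hr) (hb r hR hr),
    fun x y a hx hy r hR hr => hr.2.2.2.1 x y a (hx r hR hr) (hy r hR hr),
    fun a b h r hR hr => hr.2.2.2.2 a b (h r hR hr)⟩

lemma ClosedUnder15.comp_self (hr : ClosedUnder15 (univ : Set L) r) :
    ClosedUnder15 (univ : Set L) fun x y => ∃ z, r x z ∧ r z y := by
  obtain ⟨⟨hbot, htop⟩, hmono, hinf, hsup, hcompl⟩ := hr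
  have hle_left {x a b : L} (hxa : x ≤ a) (h : r a b) : r x b :=
    hmono x a b b trivial trivial hxa h le_rfl
  have hle_right {a b y : L} (h : r a b) (hby : b ≤ y) : r a y :=
    hmono a a b y trivial trivial le_rfl h hby
  refine ⟨⟨⟨⊥, hbot, hbot⟩, ⟨⊤, htop, htop⟩⟩, ?_, ?_, ?_, ?_⟩
  · rintro x a b y - - hxa ⟨z, haz, hzb⟩ hby
    exact ⟨z, hle_left hxa haz, hle_right hzb hby⟩
  · rintro x a b ⟨z₁, hxz₁, hz₁a⟩ ⟨z₂, hxz₂, hz₂b⟩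
    exact ⟨z₁ ⊓ z₂, hinf _ _ _ hxz₁ hxz₂,
      hinf _ _ _ (hle_left inf_le_left hz₁a) (hle_left inf_le_right hz₂b)⟩
  · rintro x y a ⟨z₁, hxz₁, hz₁a⟩ ⟨z₂, hyz₂, hz₂a⟩
    exact ⟨z₁ ⊔ z₂, hsup _ _ _ (hle_right hxz₁ le_sup_left) (hle_right hyz₂ le_sup_right),
      hsup _ _ _ hz₁a hz₂a⟩
  · rintro a b ⟨z, haz, hzb⟩
    exact ⟨zᶜ, hcompl _ _ hzb, hcompl _ _ haz⟩

lemma leastClosed15_exists_between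
    (hR : ∀ a b, R a b → ∃ z, leastClosed15 univ R a z ∧ leastClosed15 univ R z b)
    {x y : L} (h : leastClosed15 univ R x y) :
    ∃ z, leastClosed15 univ R x z ∧ leastClosed15 univ R z y :=
  leastClosed15_le hR closedUnder15_leastClosed15.comp_self h

lemma IsStrongInclusion.of_closedUnder15 (hr : ClosedUnder15 P r)
    (hwi : ∀ a b, r a b → WellInside a b) (hint : ∀ a b, r a b → ∃ z ∈ P, r a z ∧ r z b) :
    IsStrongInclusion P r :=
  ⟨hr.1, hr.2.1, hr.2.2.1, hr.2.2.2.1, hr.2.2.2.2, hwi, hint⟩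

end LeastClosed15

section KIncl

variable {M L : Type*} [Order.Frame M] [Order.Frame L] (k : FrameHom M L)

lemma kIncl_map {b a : M} (h : WellInside b a) : kIncl k (k b) (k a) :=
  leastClosed15_of_rel ⟨a, b, h, rfl, rfl⟩

lemma WellInside.of_kIncl {x y : L} (h : kIncl k x y) : WellInside x y :=
  leastClosed15_le (by rintro _ _ ⟨a, b, hba, rfl, rfl⟩; exact hba.map k)
    closedUnder15_wellInside h

lemma kIncl_exists_between (hMc : IsCompactFrame M) (hMr : IsRegularFrame M) {x y : L}
    (h : kIncl k x y) : ∃ z, kIncl k x z ∧ kIncl k z y := by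
  refine leastClosed15_exists_between ?_ h
  rintro _ _ ⟨a, b, hba, rfl, rfl⟩
  obtain ⟨c, hbc, hca⟩ := hba.exists_between hMc hMr
  exact ⟨k c, kIncl_map k hbc, kIncl_map k hca⟩

lemma sSup_kIncl_eq (hMr : IsRegularFrame M) (hsurj : Function.Surjective k) (a : L) :
    sSup {x | kIncl k x a} = a := by
  refine le_antisymm (sSup_le fun x hx => (WellInside.of_kIncl k hx).le) ?_
  obtain ⟨b, rfl⟩ := hsurj a
  calc k b = k (sSup {c | WellInside c b}) := congrArg k (hMr b)
    _ = sSup (k '' {c | WellInside c b}) := map_sSup k _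
    _ ≤ sSup {x | kIncl k x (k b)} := sSup_le_sSup (image_subset_iff.2 fun _ => kIncl_map k)

end KIncl

theorem kIncl_isStrongInclusion_compatible_general
    {M L : Type*} [Order.Frame M] [Order.Frame L]
    (hMc : IsCompactFrame M) (hMr : IsRegularFrame M)
    (k : FrameHom M L)
    (hsurj : Function.Surjective k) :
    IsStrongInclusion (Set.univ : Set L) (kIncl k) ∧
      ∀ a : L, a = sSup {x | kIncl k x a} := by
  refine ⟨IsStrongInclusion.of_closedUnder15 closedUnder15_leastClosed15
    (fun _ _ => WellInside.of_kIncl k) fun _ _ h => ?_,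
    fun a => (sSup_kIncl_eq k hMr hsurj a).symm⟩
  obtain ⟨z, hxz, hzy⟩ := kIncl_exists_between k hMc hMr h
  exact ⟨z, trivial, hxz, hzy⟩

/-- The relation associated with a compactification is a compatible strong
inclusion on `L`. -/
theorem kIncl_isStrongInclusion_compatible
    {M L : Type*} [Order.Frame M] [Order.Frame L]
    (hMc : IsCompactFrame M) (hMr : IsRegularFrame M)
    (k : FrameHom M L) (hdense : ∀ a : M, k a = ⊥ → a = ⊥)
    (hsurj : Function.Surjective k) :
    IsStrongInclusion (Set.univ : Set L) (kIncl k) ∧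
      ∀ a : L, a = sSup {x | kIncl k x a} :=
  kIncl_isStrongInclusion_compatible_general hMc hMr k hsurj
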